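/- arXiv:2301.06862 — 2 statements merged into one kernel-verified Lean document; each statement's English description precedes it below -/
import Mathlib

section
/- In any semiring, backward values of an acyclic weighted graph satisfy the backward recursion: if β(q) is defined as the sum over all paths π starting at q of (inner weight of π) ⊗ ρ(endpoint of π), then β(q) = ρ(q) ⊕ ⊕_{edges (q, w, q')} w ⊗ β(q'), where the sum ranges over all outgoing edges of q. -/
/-! Apart from the empty path, every path from `q` is an edge `(q, w, q')` followed by a path
from `q'`, and these decompositions are unique; distributivity then pulls `w` out of the sum
over the paths from `q'`, leaving `w ⊗ β(q')`. -/

/-- `IsPathFrom E q es`: `es` is a (possibly empty) list of consecutive edges of `E`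
starting at `q`.  An edge `(p, w, p')` goes from `p` to `p'` with weight `w`. -/
def IsPathFrom {Q K : Type*} (E : Finset (Q × K × Q)) : Q → List (Q × K × Q) → Prop
  | _, [] => True
  | q, e :: es => e ∈ E ∧ e.1 = q ∧ IsPathFrom E e.2.2 es

/-- The final state of a path starting at `q`. -/
def pathEnd {Q K : Type*} (q : Q) : List (Q × K × Q) → Q
  | [] => q
  | e :: es => pathEnd e.2.2 es

/-- The inner weight of a path: the `⊗`-product of its edge weights (`1` if empty). -/
def innerWeight {Q K : Type*} [Semiring K] (es : List (Q × K × Q)) : K :=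
  (es.map fun e => e.2.1).prod

section Paths

variable {Q K : Type*}

@[simp]
theorem innerWeight_nil [Semiring K] : innerWeight ([] : List (Q × K × Q)) = 1 := rfl

@[simp]
theorem innerWeight_cons [Semiring K] (e : Q × K × Q) (es : List (Q × K × Q)) :
    innerWeight (e :: es) = e.2.1 * innerWeight es := List.prod_cons

theorem erase_nil_eq_biUnion_cons [DecidableEq Q] [DecidableEq (List (Q × K × Q))]
    {E : Finset (Q × K × Q)} {P : Q → Finset (List (Q × K × Q))}
    (hP : ∀ q es, es ∈ P q ↔ IsPathFrom E q es) (q : Q) :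
    (P q).erase [] = (E.filter (·.1 = q)).biUnion fun e => (P e.2.2).image (e :: ·) := by
  ext es
  simp only [Finset.mem_erase, Finset.mem_biUnion, Finset.mem_filter, Finset.mem_image, hP]
  constructor
  · rintro ⟨hne, hpath⟩
    cases es with
    | nil => exact (hne rfl).elim
    | cons e es => exact ⟨e, ⟨hpath.1, hpath.2.1⟩, es, hpath.2.2, rfl⟩
  · rintro ⟨e, ⟨heE, rfl⟩, es, hes, rfl⟩
    exact ⟨List.cons_ne_nil _ _, heE, rfl, hes⟩

theorem sum_paths_eq_nil_add_sum_cons [DecidableEq Q] {M : Type*} [AddCommMonoid M]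
    {E : Finset (Q × K × Q)} {P : Q → Finset (List (Q × K × Q))}
    (hP : ∀ q es, es ∈ P q ↔ IsPathFrom E q es)
    (f : List (Q × K × Q) → M) (q : Q) :
    ∑ es ∈ P q, f es = f [] + ∑ e ∈ E.filter (·.1 = q), ∑ es ∈ P e.2.2, f (e :: es) := by
  classical
  have hnil : [] ∈ P q := (hP q []).2 trivial
  rw [← Finset.add_sum_erase _ _ hnil, erase_nil_eq_biUnion_cons hP, Finset.sum_biUnion]
  · congr 1
    refine Finset.sum_congr rfl fun e _ => Finset.sum_image fun _ _ _ _ h => List.cons_injective h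
  · intro e _ e' _ hne
    simp only [Function.onFun, Finset.disjoint_left, Finset.mem_image]
    rintro _ ⟨es, _, rfl⟩ ⟨es', _, h⟩
    exact hne (List.cons_eq_cons.mp h).1.symm

end Paths

theorem stmt_8_general {Q K : Type*} [DecidableEq Q] [Semiring K]
    (E : Finset (Q × K × Q))
    (P : Q → Finset (List (Q × K × Q)))
    (hP : ∀ q es, es ∈ P q ↔ IsPathFrom E q es)
    (ρ β : Q → K)
    (hβ : ∀ q, β q = ∑ es ∈ P q, innerWeight es * ρ (pathEnd q es)) :
    ∀ q, β q = ρ q + ∑ e ∈ E.filter (fun e => e.1 = q), e.2.1 * β e.2.2 := by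
  intro q
  rw [hβ, sum_paths_eq_nil_add_sum_cons hP]
  simp only [innerWeight_nil, one_mul, pathEnd, innerWeight_cons, mul_assoc, hβ, Finset.mul_sum]

/-- Backward recursion: if `β(q)` is the sum over all paths `π` starting at `q` of
`w_I(π) ⊗ ρ(end(π))` (where `P q` is the finite set of all paths from `q`, finite by
acyclicity), then `β(q) = ρ(q) ⊕ ⊕_{(q,w,q') ∈ E} w ⊗ β(q')`. -/
theorem stmt_8 {Q K : Type*} [DecidableEq Q] [Semiring K]
    (E : Finset (Q × K × Q))
    (hacyc : ∀ q, ¬ Relation.TransGen (fun a b => ∃ w, (a, w, b) ∈ E) q q)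
    (P : Q → Finset (List (Q × K × Q)))
    (hP : ∀ q es, es ∈ P q ↔ IsPathFrom E q es)
    (ρ β : Q → K)
    (hβ : ∀ q, β q = ∑ es ∈ P q, innerWeight es * ρ (pathEnd q es)) :
    ∀ q, β q = ρ q + ∑ e ∈ E.filter (fun e => e.1 = q), e.2.1 * β e.2.2 :=
  stmt_8_general E P hP ρ β hβ
end

section
/- In the lazy-multiplier Fenwick tree, define the scaled value of a node j as m_j ⊗ u_j and maintain the invariant that for every internal node j, u_j equals the ⊕-sum of the scaled values of its children. Then the effective leaf value v_n = m_r ⊗ m_{j₁} ⊗ ... ⊗ m_n ⊗ u_n (product of multipliers along the root-to-leaf path applied to u_n), and the scaled value of the root equals ⊕_{n=1}^N v_n. Consequently, replacing m_r by m ⊗ m_r multiplies every effective leaf value, and the root's scaled value, on the left by m. -/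
/-- A full binary tree with lazy multipliers: every node (leaf or internal) stores a
pair `(m, u)` — a lazy left multiplier `m` and an unscaled value `u`. -/
inductive MTree (K : Type*) where
  | leaf (m u : K) : MTree K
  | node (m u : K) (l r : MTree K) : MTree K

namespace MTree

variable {K : Type*}

/-- The scaled value `m_j ⊗ u_j` of the root node. -/
def scaled [Semiring K] : MTree K → K
  | leaf m u => m * u
  | node m u _ _ => m * u

/-- The invariant: at every internal node `j`, the unscaled value `u_j` is the
`⊕`-sum of the scaled values of its two children. -/
def Inv [Semiring K] : MTree K → Prop
  | leaf _ _ => True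
  | node _ u l r => u = scaled l + scaled r ∧ Inv l ∧ Inv r

/-- The effective leaf values: the leaf value `u_n` left-multiplied by the product
of the multipliers along the root-to-leaf path (accumulated in `acc`). -/
def effLeaves [Semiring K] (acc : K) : MTree K → List K
  | leaf m u => [acc * (m * u)]
  | node m _ l r => effLeaves (acc * m) l ++ effLeaves (acc * m) r

/-- Replace the root multiplier `m_r` by `m ⊗ m_r`. -/
def multRoot (m : K) [Semiring K] : MTree K → MTree K
  | leaf m₀ u => leaf (m * m₀) u
  | node m₀ u l r => node (m * m₀) u l r

end MTree

/-! Since the path product is accumulated on the left, the effective leaves of a subtree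
reached with prefix `acc` are `acc` times those reached with prefix `1`; left distributivity
then turns the invariant into `∑ effective leaves = acc ⊗ scaled value`.
Multiplying the root multiplier by `m` just prepends `m` to every path product. -/

namespace MTree

variable {K : Type*} [Semiring K]

theorem effLeaves_mul (a b : K) (t : MTree K) :
    t.effLeaves (a * b) = (t.effLeaves b).map (a * ·) := by
  induction t generalizing b with
  | leaf m u => simp only [effLeaves, List.map_cons, List.map_nil, mul_assoc]
  | node m u l r ihl ihr => simp only [effLeaves, List.map_append, mul_assoc, ihl, ihr]

theorem sum_effLeaves (acc : K) {t : MTree K} (ht : t.Inv) :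
    (t.effLeaves acc).sum = acc * t.scaled := by
  induction t generalizing acc with
  | leaf m u => simp [effLeaves, scaled]
  | node m u l r ihl ihr =>
    obtain ⟨rfl, hl, hr⟩ := ht
    simp only [effLeaves, scaled, List.sum_append, ihl _ hl, ihr _ hr, mul_add, mul_assoc]

theorem effLeaves_multRoot (m acc : K) (t : MTree K) :
    (t.multRoot m).effLeaves acc = t.effLeaves (acc * m) := by
  cases t <;> simp only [multRoot, effLeaves, mul_assoc]

theorem scaled_multRoot (m : K) (t : MTree K) : (t.multRoot m).scaled = m * t.scaled := by
  cases t <;> simp only [multRoot, scaled, mul_assoc]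

end MTree

/-- Correctness of the lazy-multiplier Fenwick tree over a semiring: under the
invariant, the scaled value of the root equals the `⊕`-sum of the effective leaf
values `v_n` (each `u_n` multiplied on the left by the multipliers on its
root-to-leaf path); consequently, replacing the root multiplier `m_r` by `m ⊗ m_r`
multiplies every effective leaf value, and the root's scaled value, on the left
by `m`. -/
theorem stmt_16 {K : Type*} [Semiring K] (t : MTree K) (ht : t.Inv) :
    t.scaled = (t.effLeaves 1).sum ∧
      ∀ m : K,
        (t.multRoot m).effLeaves 1 = (t.effLeaves 1).map (fun x => m * x) ∧
        (t.multRoot m).scaled = m * t.scaled := by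
  refine ⟨by rw [MTree.sum_effLeaves 1 ht, one_mul], fun m => ⟨?_, MTree.scaled_multRoot m t⟩⟩
  rw [MTree.effLeaves_multRoot, one_mul, ← MTree.effLeaves_mul, mul_one]
end
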